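/- arXiv:math/9505215 — 4 statements merged into one kernel-verified Lean document; each statement's English description precedes it below -/
import Mathlib

section
/- Let m ≥ 1 and let I_m be the ω-coloring on the set A = {0,1}^{m+1} of binary sequences of length m+1 given by coloring the pair {η, ν} by the length of the longest common initial segment of η and ν. Then the pair {η_m, η_{m+1}} of any special sequence ⟨η_0, …, η_{m+1}⟩ is, up to the equivalence relation induced by I_m, characterized as follows: in I_m restricted to a special sequence, {η_m, η_{m+1}} is the only pair among {η_0,…,η_{m+1}} whose color is not shared with any other pair. -/
/-- The longest common initial segment of two binary strings. -/
def lcis : List Bool → List Bool → List Bool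
  | a :: as, b :: bs => if a = b then a :: lcis as bs else []
  | _, _ => []

theorem comm_comm : ∀ a b : List Bool, lcis a b = lcis b a := by
  intro a
  induction a with
  | nil => intro b; cases b <;> rfl
  | cons x xs ih =>
    intro b
    cases b with
    | nil => rfl
    | cons y ys =>
      by_cases h : x = y
      · subst h; simp [lcis, ih]
      · simp [lcis, h, Ne.symm h]


@[simp] lemma lcis_nil : ∀ b : List Bool, lcis [] b = [] := by
  intro b; cases b <;> rfl

@[simp] lemma lcis_nil' : ∀ b : List Bool, lcis b [] = [] := by
  intro b; cases b <;> rfl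

lemma lcis_prefix : ∀ a b : List Bool, lcis a b <+: a := by
  intro a
  induction a with
  | nil => intro b; cases b <;> simp [lcis]
  | cons x xs ih =>
    intro b
    cases b with
    | nil => simp [lcis]
    | cons y ys =>
      by_cases h : x = y
      · simp [lcis, h, ih ys]
      · simp [lcis, h]

lemma take_eq_of_le_lcis : ∀ (a b : List Bool) (n : ℕ),
    n ≤ (lcis a b).length → a.take n = b.take n := by
  intro a
  induction a with
  | nil => intro b n h; simp at h; simp [h]
  | cons x xs ih =>
    intro b n h
    cases b with
    | nil => simp at h; simp [h]
    | cons y ys =>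
      by_cases hxy : x = y
      · subst hxy
        cases n with
        | zero => simp
        | succ n =>
          simp [lcis] at h
          simp [List.take_succ_cons, ih ys n h]
      · simp [lcis, hxy] at h; simp [h]

lemma le_lcis_of_take_eq : ∀ (a b : List Bool) (n : ℕ),
    n ≤ a.length → a.take n = b.take n → n ≤ (lcis a b).length := by
  intro a
  induction a with
  | nil => intro b n h _; simpa using h
  | cons x xs ih =>
    intro b n h ht
    cases n with
    | zero => simp
    | succ n =>
      cases b with
      | nil => simp at ht
      | cons y ys =>
        simp [List.take_succ_cons] at ht
        obtain ⟨rfl, ht⟩ := ht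
        simp at h
        simpa [lcis] using ih ys n h ht

lemma getElem?_ne_of_lcis : ∀ (a b : List Bool),
    (lcis a b).length < a.length → (lcis a b).length < b.length →
    a[(lcis a b).length]? ≠ b[(lcis a b).length]? := by
  intro a
  induction a with
  | nil => intro b h _; simp at h
  | cons x xs ih =>
    intro b ha hb
    cases b with
    | nil => simp at hb
    | cons y ys =>
      by_cases hxy : x = y
      · subst hxy
        simp [lcis] at ha hb ⊢
        exact ih ys ha hb
      · simp [lcis, hxy]

lemma lcis_eq_take (a b : List Bool) : lcis a b = a.take (lcis a b).length :=
  List.prefix_iff_eq_take.mp (lcis_prefix a b)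

lemma lcis_step (a b c : List Bool) (n : ℕ)
    (hab : (lcis a b).length = n) (hbc : n + 1 ≤ (lcis b c).length)
    (ha : n < a.length) (hb : n < b.length) :
    lcis a c = lcis a b := by
  have h1 : a.take n = b.take n := by
    rw [← hab]; exact take_eq_of_le_lcis a b _ le_rfl
  have h2 : b.take (n + 1) = c.take (n + 1) := take_eq_of_le_lcis b c _ hbc
  have h3 : b.take n = c.take n := by
    have hmin : min n (n + 1) = n := by omega
    have := congrArg (List.take n) h2
    simpa [List.take_take, hmin] using this
  have h4 : n ≤ (lcis a c).length :=
    le_lcis_of_take_eq a c n (le_of_lt ha) (h1.trans h3)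
  have h5 : ¬ (n + 1 ≤ (lcis a c).length) := by
    intro hle
    have h6 : a.take (n + 1) = c.take (n + 1) := take_eq_of_le_lcis a c _ hle
    have hget : a[n]? ≠ b[n]? := by
      have := getElem?_ne_of_lcis a b (by omega) (by omega)
      rwa [hab] at this
    apply hget
    have e1 : getElem? a n = getElem? c n := by
      have := congrArg (fun l : List Bool => l[n]?) h6
      simpa [List.getElem?_take_of_lt, Nat.lt_succ_self] using this
    have e2 : getElem? b n = getElem? c n := by
      have := congrArg (fun l : List Bool => l[n]?) h2
      simpa [List.getElem?_take_of_lt, Nat.lt_succ_self] using this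
    rw [e1, ← e2]
  have h7 : (lcis a c).length = n := by omega
  rw [lcis_eq_take a c, h7, lcis_eq_take a b, hab]

/-- Binary strings of length `m + 1`. -/
def Str (m : ℕ) : Type := {l : List Bool // l.length = m + 1}

/-- The coloring `I_m` on `{0,1}^{m+1}`, coloring a pair by its longest common
initial segment. -/
def colI (m : ℕ) : Sym2 (Str m) → List Bool :=
  Sym2.lift ⟨fun a b => lcis a.1 b.1, fun a b => comm_comm a.1 b.1⟩

/-- A special sequence: `⟨η_0, …, η_{m+1}⟩` in `{0,1}^{m+1}` with `|η_i ∩ η_{i+1}| = i`. -/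
def IsSpecial {m : ℕ} (η : Fin (m + 2) → Str m) : Prop :=
  ∀ i : Fin (m + 1), (lcis (η i.castSucc).1 (η i.succ).1).length = i


lemma str_len {m : ℕ} (x : Str m) : x.1.length = m + 1 := x.2

lemma special_chain {m : ℕ} (η : Fin (m + 2) → Str m) (hη : IsSpecial η) :
    ∀ (d i : ℕ) (h : i + d + 1 ≤ m + 1),
      lcis (η ⟨i, by omega⟩).1 (η ⟨i + d + 1, by omega⟩).1 =
        (η ⟨i, by omega⟩).1.take i := by
  intro d
  induction d with
  | zero =>
    intro i h
    have hs := hη ⟨i, by omega⟩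
    have ht := lcis_eq_take (η (Fin.castSucc ⟨i, by omega⟩)).1
      (η (Fin.succ ⟨i, by omega⟩)).1
    rw [hs] at ht
    exact ht
  | succ d ih =>
    intro i h
    have hih := ih i (by omega)
    have hlen : (lcis (η ⟨i, by omega⟩).1 (η ⟨i + d + 1, by omega⟩).1).length = i := by
      rw [hih, List.length_take, str_len]; omega
    have hs := hη ⟨i + d + 1, by omega⟩
    have key := lcis_step (η ⟨i, by omega⟩).1 (η ⟨i + d + 1, by omega⟩).1
      (η ⟨i + (d + 1) + 1, by omega⟩).1 i hlen
      (by rw [show (lcis (η ⟨i + d + 1, by omega⟩).1 (η ⟨i + (d+1) + 1, by omega⟩).1).length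
            = i + d + 1 from hs]; omega)
      (by rw [str_len]; omega) (by rw [str_len]; omega)
    exact key.trans hih

lemma special_color {m : ℕ} (η : Fin (m + 2) → Str m) (hη : IsSpecial η)
    (k l : Fin (m + 2)) (h : (k : ℕ) < l) :
    lcis (η k).1 (η l).1 = (η k).1.take k := by
  have hl := l.isLt
  have := special_chain η hη ((l : ℕ) - k - 1) k (by omega)
  have ek : (⟨(k : ℕ), by omega⟩ : Fin (m + 2)) = k := rfl
  have el : (⟨(k : ℕ) + ((l : ℕ) - (k : ℕ) - 1) + 1, by omega⟩ : Fin (m + 2)) = l := by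
    apply Fin.ext; simp; omega
  rw [ek, el] at this
  exact this

lemma special_color_length {m : ℕ} (η : Fin (m + 2) → Str m) (hη : IsSpecial η)
    (k l : Fin (m + 2)) (h : k ≠ l) :
    (lcis (η k).1 (η l).1).length = min (k : ℕ) (l : ℕ) := by
  rcases lt_trichotomy (k : ℕ) (l : ℕ) with hkl | hkl | hkl
  · rw [special_color η hη k l hkl, List.length_take, str_len]
    have := l.isLt; omega
  · exact absurd (Fin.ext hkl) h
  · rw [comm_comm, special_color η hη l k hkl, List.length_take, str_len]
    have := k.isLt; omega

lemma main_aux {m : ℕ} (hm : 1 ≤ m) (η : Fin (m + 2) → Str m) (hη : IsSpecial η)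
    (i j : Fin (m + 2)) (hij : (i : ℕ) < j) :
    (∀ k l : Fin (m + 2), k ≠ l → ({k, l} : Set (Fin (m + 2))) ≠ {i, j} →
        lcis (η k).1 (η l).1 ≠ lcis (η i).1 (η j).1) ↔
      ({i, j} : Set (Fin (m + 2))) = {⟨m, by omega⟩, ⟨m + 1, by omega⟩} := by
  have hjlt := j.isLt
  have hilt := i.isLt
  constructor
  · intro H
    by_contra hne
    have him : (i : ℕ) < m := by
      rcases Nat.lt_or_ge (i : ℕ) m with h | h
      · exact h
      · exact absurd (by
          rw [Set.pair_eq_pair_iff]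
          exact Or.inl ⟨Fin.ext (show (i : ℕ) = m by omega),
            Fin.ext (show (j : ℕ) = m + 1 by omega)⟩) hne
    set j' : Fin (m + 2) :=
      if (j : ℕ) = (i : ℕ) + 1 then ⟨(i : ℕ) + 2, by omega⟩ else ⟨(i : ℕ) + 1, by omega⟩
      with hj'def
    have hj'val : (j' : ℕ) = (i : ℕ) + 2 ∨ (j' : ℕ) = (i : ℕ) + 1 := by
      by_cases hc : (j : ℕ) = (i : ℕ) + 1 <;> simp [hj'def, hc]
    have hij' : (i : ℕ) < (j' : ℕ) := by omega
    have hj'j : (j' : ℕ) ≠ (j : ℕ) := by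
      by_cases hc : (j : ℕ) = (i : ℕ) + 1 <;> simp [hj'def, hc] <;> omega
    refine H i j' (fun hh => by simp [hh] at hij') ?_ ?_
    · intro hs
      rcases Set.pair_eq_pair_iff.mp hs with ⟨_, h2⟩ | ⟨h1, _⟩
      · exact hj'j (by rw [h2])
      · rw [h1] at hij; omega
    · rw [special_color η hη i j' hij', special_color η hη i j hij]
  · intro hset k l hkl hklij hcolor
    have hi : (i : ℕ) = m ∧ (j : ℕ) = m + 1 := by
      rcases Set.pair_eq_pair_iff.mp hset with ⟨h1, h2⟩ | ⟨h1, h2⟩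
      · rw [h1, h2]; exact ⟨rfl, rfl⟩
      · rw [h1, h2] at hij; simp at hij
    have h1 := special_color_length η hη k l hkl
    have h2 := special_color_length η hη i j (fun hh => by rw [hh] at hij; omega)
    rw [hcolor, h2] at h1
    have hklt := k.isLt
    have hllt := l.isLt
    have hklne : (k : ℕ) ≠ (l : ℕ) := fun hh => hkl (Fin.ext hh)
    have hmin : min (i : ℕ) (j : ℕ) = m := by omega
    rw [hmin] at h1
    apply hklij
    rw [hset, Set.pair_eq_pair_iff]
    rcases Nat.lt_or_ge (k : ℕ) (l : ℕ) with hc | hc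
    · exact Or.inl ⟨Fin.ext (show (k : ℕ) = m by omega),
        Fin.ext (show (l : ℕ) = m + 1 by omega)⟩
    · exact Or.inr ⟨Fin.ext (show (k : ℕ) = m + 1 by omega),
        Fin.ext (show (l : ℕ) = m by omega)⟩

/-- In `I_m` restricted to a special sequence, `{η_m, η_{m+1}}` is the unique pair whose
color (longest common initial segment) is not shared with any other pair. -/
theorem special_pair_unique_color (m : ℕ) (hm : 1 ≤ m) (η : Fin (m + 2) → Str m)
    (hη : IsSpecial η) (i j : Fin (m + 2)) (hij : i ≠ j) :
    (∀ k l : Fin (m + 2), k ≠ l → ({k, l} : Set (Fin (m + 2))) ≠ {i, j} →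
        lcis (η k).1 (η l).1 ≠ lcis (η i).1 (η j).1) ↔
      ({i, j} : Set (Fin (m + 2))) = {⟨m, by omega⟩, ⟨m + 1, by omega⟩} := by
  rcases lt_trichotomy (i : ℕ) (j : ℕ) with h | h | h
  · exact main_aux hm η hη i j h
  · exact absurd (Fin.ext h) hij
  · have := main_aux hm η hη j i h
    simp only [Set.pair_comm j i, comm_comm (η j).1 (η i).1] at this
    exact this
end

section
/- Let q = ⟨v,d⟩ and p = ⟨u,c⟩ be pairs where u,v are finite sets of ordinals and c : [u]² → ℕ, d : [v]² → ℕ, with p a one-point extension of q (i.e., u = v ∪ {r} for some r greater than all elements of v, d ⊆ c, pairs not in dom(d) get colors outside rng(d), and any two pairs receiving the same c-color either are equal or both lie in dom(d)). Let ⟨η_0,…,η_{m+1}⟩ be a special sequence and let h be an embedding of J = I_m restricted to {η_0,…,η_{m+1}} into c. Then the range of h is contained in v, so h is an embedding of J into d. -/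
lemma lcis_cons_same (x : Bool) (as bs : List Bool) :
    lcis (x :: as) (x :: bs) = x :: lcis as bs := by simp [lcis]

lemma lcis_cons_ne {x y : Bool} (hxy : x ≠ y) (as bs : List Bool) :
    lcis (x :: as) (y :: bs) = [] := by simp [lcis, hxy]

lemma lcis_ultra : ∀ a b c : List Bool,
    (lcis a b).length < (lcis b c).length → lcis a c = lcis a b := by
  intro a
  induction a with
  | nil => intro b c _; cases c <;> rfl
  | cons x xs ih =>
    intro b c hlt
    cases b with
    | nil => simp [lcis] at hlt
    | cons y ys =>
      cases c with
      | nil => simp [lcis] at hlt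
      | cons z zs =>
        by_cases hxy : x = y
        · by_cases hyz : y = z
          · subst hxy; subst hyz
            rw [lcis_cons_same, lcis_cons_same] at hlt
            simp only [List.length_cons, Nat.add_lt_add_iff_right] at hlt
            rw [lcis_cons_same, lcis_cons_same, ih _ _ hlt]
          · rw [lcis_cons_ne hyz] at hlt; simp at hlt
        · by_cases hyz : y = z
          · subst hyz
            rw [lcis_cons_ne hxy, lcis_cons_ne hxy]
          · rw [lcis_cons_ne hyz] at hlt; simp at hlt

lemma special_succ_len {m : ℕ} {η : Fin (m + 2) → Str m} (hη : IsSpecial η)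
    (i : Fin (m + 2)) (hi : i.1 < m + 1) :
    (lcis (η i).1 (η ⟨i.1 + 1, by omega⟩).1).length = i.1 := by
  have := hη ⟨i.1, hi⟩
  have e1 : (⟨i.1, hi⟩ : Fin (m + 1)).castSucc = i := Fin.ext rfl
  have e2 : (⟨i.1, hi⟩ : Fin (m + 1)).succ = ⟨i.1 + 1, by omega⟩ := Fin.ext rfl
  rw [e1, e2] at this
  exact this

lemma special_key {m : ℕ} {η : Fin (m + 2) → Str m} (hη : IsSpecial η) :
    ∀ n : ℕ, ∀ j i : Fin (m + 2), j.1 = n → ∀ hij : i < j,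
      lcis (η i).1 (η j).1
        = lcis (η i).1 (η ⟨i.1 + 1, Nat.lt_of_le_of_lt hij j.isLt⟩).1 := by
  intro n
  induction n using Nat.strong_induction_on with
  | _ n ih =>
    intro j i hjn hij
    rcases eq_or_lt_of_le (show i.1 + 1 ≤ j.1 from hij) with heq | hlt
    · have e : (⟨i.1 + 1, Nat.lt_of_le_of_lt hij j.isLt⟩ : Fin (m + 2)) = j := Fin.ext heq
      rw [e]
    · have hb1 : j.1 - 1 < m + 2 := by omega
      have hip : i < (⟨j.1 - 1, hb1⟩ : Fin (m + 2)) := by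
        rw [Fin.lt_def]; show i.1 < j.1 - 1; omega
      have ihprev := ih (j.1 - 1) (by omega) ⟨j.1 - 1, hb1⟩ i rfl hip
      have len1 : (lcis (η i).1 (η ⟨j.1 - 1, hb1⟩).1).length = i.1 := by
        rw [ihprev]
        exact special_succ_len hη i (by omega)
      have len2 : (lcis (η ⟨j.1 - 1, hb1⟩).1 (η j).1).length = j.1 - 1 := by
        have h2 := special_succ_len hη ⟨j.1 - 1, hb1⟩ (by show j.1 - 1 < m + 1; omega)
        have e : (⟨(⟨j.1 - 1, hb1⟩ : Fin (m + 2)).1 + 1, by show j.1 - 1 + 1 < m + 2; omega⟩ : Fin (m + 2)) = j := by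
          apply Fin.ext; show j.1 - 1 + 1 = j.1; omega
        rw [e] at h2
        exact h2
      have := lcis_ultra (η i).1 (η ⟨j.1 - 1, hb1⟩).1 (η j).1
        (by rw [len1, len2]; omega)
      rw [this, ihprev]

lemma special_eq {m : ℕ} {η : Fin (m + 2) → Str m} (hη : IsSpecial η)
    {a b b' : Fin (m + 2)} (hab : a < b) (hab' : a < b') :
    lcis (η a).1 (η b).1 = lcis (η a).1 (η b').1 := by
  rw [special_key hη b.1 b a rfl hab, special_key hη b'.1 b' a rfl hab']

/-- If `p = ⟨u, c⟩` is a one-point extension of `q = ⟨v, d⟩` (where `u = v ∪ {r}` with `r`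
above `v`, new pairs get new colors, and colors repeat only on pairs of `v`), and `h` embeds
the restriction of `I_m` to a special sequence into `c`, then the range of `h` lies in `v`,
i.e. `h` is an embedding into `d`. -/
theorem one_point_extension_embedding (m : ℕ) (hm : 1 ≤ m)
    (v : Finset Ordinal) (r : Ordinal) (hr : ∀ x ∈ v, x < r)
    (u : Finset Ordinal) (hu : u = insert r v)
    (c : Sym2 Ordinal → ℕ)
    -- pairs of `u` not contained in `v` get colors outside the range of `d = c ↾ [v]²`
    (hnew : ∀ i j k l : Ordinal, i ∈ u → j ∈ u → i ≠ j → ¬(i ∈ v ∧ j ∈ v) →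
      k ∈ v → l ∈ v → k ≠ l → c s(i, j) ≠ c s(k, l))
    -- two pairs of `u` with the same color are equal or both lie in `[v]²`
    (hrep : ∀ i j k l : Ordinal, i ∈ u → j ∈ u → i ≠ j → k ∈ u → l ∈ u → k ≠ l →
      c s(i, j) = c s(k, l) →
        s(i, j) = s(k, l) ∨ (i ∈ v ∧ j ∈ v ∧ k ∈ v ∧ l ∈ v))
    (η : Fin (m + 2) → Str m) (hη : IsSpecial η)
    (h : Fin (m + 2) → Ordinal) (hinj : Function.Injective h)
    (hran : ∀ i, h i ∈ u)
    -- `h` is an embedding of `J = I_m ↾ {η_0, …, η_{m+1}}` into `c`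
    (hemb : ∀ i j k l : Fin (m + 2), i ≠ j → k ≠ l →
      c s(h i, h j) ≠ c s(h k, h l) → lcis (η i).1 (η j).1 ≠ lcis (η k).1 (η l).1) :
    ∀ i, h i ∈ v := by
  have key : ∀ (a b b' : Fin (m + 2)), a < b → a < b' → b ≠ b' →
      h a ∈ v ∧ h b ∈ v := by
    intro a b b' hab hab' hbb'
    have hlcis := special_eq hη hab hab'
    have hc : c s(h a, h b) = c s(h a, h b') := by
      by_contra hne
      exact hemb a b a b' (Fin.ne_of_lt hab) (Fin.ne_of_lt hab') hne hlcis
    have hhab : h a ≠ h b := fun e => (Fin.ne_of_lt hab) (hinj e)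
    have hhab' : h a ≠ h b' := fun e => (Fin.ne_of_lt hab') (hinj e)
    rcases hrep (h a) (h b) (h a) (h b') (hran a) (hran b) hhab (hran a) (hran b')
        hhab' hc with heq | hmem
    · rw [Sym2.eq_iff] at heq
      rcases heq with ⟨-, e2⟩ | ⟨e1, e2⟩
      · exact absurd (hinj e2) hbb'
      · exact absurd (hinj e2).symm (Fin.ne_of_lt hab)
    · exact ⟨hmem.1, hmem.2.1⟩
  intro t
  by_cases ht0 : t.1 = 0
  · have := key ⟨0, by omega⟩ ⟨1, by omega⟩ ⟨2, by omega⟩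
      (Fin.mk_lt_mk.mpr (by omega)) (Fin.mk_lt_mk.mpr (by omega))
      (Fin.ne_of_val_ne (by norm_num))
    have e : t = ⟨0, by omega⟩ := Fin.ext ht0
    rw [e]; exact this.1
  · by_cases ht1 : t.1 = 1
    · have := key ⟨0, by omega⟩ t ⟨2, by omega⟩
        (by rw [Fin.lt_def]; show (0:ℕ) < t.1; omega)
        (Fin.mk_lt_mk.mpr (by omega))
        (Fin.ne_of_val_ne (show t.1 ≠ (2:ℕ) by omega))
      exact this.2
    · have := key ⟨0, by omega⟩ t ⟨1, by omega⟩
        (by rw [Fin.lt_def]; show (0:ℕ) < t.1; omega)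
        (Fin.mk_lt_mk.mpr (by omega))
        (Fin.ne_of_val_ne (show t.1 ≠ (1:ℕ) by omega))
      exact this.2
end

section
/- If I is a collection of identities all of which are realized by every ω-coloring of [ℵ_m]² (m ≥ 1), then every identity in the closure cl(I) under end-homogeneous amalgamation is realized by every ω-coloring of [ℵ_{m+1}]². -/
/-- `f` realizes, within the set `S`, the identity represented by the coloring `g` with
finite field `G`: there is an injection `k` of `G` into `S` such that differently
`f`-colored image pairs come from differently `g`-colored pairs. -/
def RealizesWithin {β : Type*} (f : Sym2 β → ℕ) (G : Finset ℕ) (g : Sym2 ℕ → ℕ)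
    (S : Set β) : Prop :=
  ∃ k : ℕ → β, Set.InjOn k G ∧ (∀ x ∈ G, k x ∈ S) ∧
    ∀ x y u v : ℕ, x ∈ G → y ∈ G → u ∈ G → v ∈ G → x ≠ y → u ≠ v →
      f s(k x, k y) ≠ f s(k u, k v) → g s(x, y) ≠ g s(u, v)

/-- `f` realizes the identity represented by the coloring `g` with finite field `G`. -/
def RealizesId {β : Type*} (f : Sym2 β → ℕ) (G : Finset ℕ) (g : Sym2 ℕ → ℕ) : Prop :=
  RealizesWithin f G g Set.univ

/-- A type of cardinality `ℵ_m`. -/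
def alephT (m : ℕ) : Type := ((Cardinal.aleph m).ord).ToType

/-!
Write `μ = ℵ_m`; as `m ≥ 1`, `μ` has uncountable cofinality. Given `f` on `[ℵ_{m+1}]²`, choose sets
`A₀ ⊇ A₁ ⊇ ⋯` of size `> μ` and realize the `i`-th identity inside `A_i \ A_{i+1}` so that all
pairs from its image to `A_{i+1}` get one color `e_i`. Then a cross pair of the amalgam gets the
color `e_i` of its lower block, as the amalgam prescribes.

For one step inside `A`, close a set `C ⊆ A` of size `μ` under the rule: if the points of `A` joined
by color `e` to all of a finite `S ⊆ C` are at most `μ` many, they lie in `C`. Pick `b₀ ∈ A \ C`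
and a fiber of size `μ` of `a ↦ f{a, b₀}` on `C`, and realize the identity there, with image `S`.
The points joined by that color to all of `S` include `b₀ ∉ C`, so there are more than `μ` of them.
-/

open Cardinal Set

/-- `k` witnesses `RealizesWithin f G g S`. -/
def RealizesVia {β : Type*} (f : Sym2 β → ℕ) (G : Finset ℕ) (g : Sym2 ℕ → ℕ) (S : Set β)
    (k : ℕ → β) : Prop :=
  Set.InjOn k G ∧ (∀ x ∈ G, k x ∈ S) ∧
    ∀ x y u v : ℕ, x ∈ G → y ∈ G → u ∈ G → v ∈ G → x ≠ y → u ≠ v →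
      f s(k x, k y) ≠ f s(k u, k v) → g s(x, y) ≠ g s(u, v)

theorem RealizesVia.realizesWithin {β : Type*} {f : Sym2 β → ℕ} {G : Finset ℕ}
    {g : Sym2 ℕ → ℕ} {S : Set β} {k : ℕ → β} (hk : RealizesVia f G g S k) :
    RealizesWithin f G g S :=
  ⟨k, hk⟩

theorem mk_alephT (m : ℕ) : #(alephT m) = ℵ_ m := by
  rw [alephT, mk_toType, card_ord]

theorem aleph0_lt_cof_aleph {m : ℕ} (hm : 1 ≤ m) : ℵ₀ < (ℵ_ m).ord.cof := by
  obtain ⟨m, rfl⟩ := Nat.exists_eq_add_of_le' hm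
  have hreg : (ℵ_ (m + 1 : ℕ)).IsRegular := by
    rw [Nat.cast_succ]
    exact isRegular_aleph_add_one _
  rw [hreg.cof_ord, ← aleph_zero]
  exact aleph_lt_aleph.mpr (by exact_mod_cast m.succ_pos)

theorem exists_seq_forall_rel {α : Type*} {p : α → Prop} {R : ℕ → α → α → Prop}
    (step : ∀ j a, p a → ∃ a', p a' ∧ R j a a') {a₀ : α} (h₀ : p a₀) :
    ∃ s : ℕ → α, ∀ j, R j (s j) (s (j + 1)) := by
  choose next hnext_p hnext_R using step
  let s : ℕ → {a // p a} := fun j =>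
    Nat.rec ⟨a₀, h₀⟩ (fun j a => ⟨next j a a.2, hnext_p j a a.2⟩) j
  exact ⟨fun j => (s j).1, fun j => hnext_R j _ (s j).2⟩

theorem exists_superset_mk_le_finset_closed {β : Type} {μ : Cardinal} (hμ : ℵ₀ ≤ μ)
    (F : Finset β → Set β) (hF : ∀ S, #(F S) ≤ μ) {C₀ : Set β} (hC₀ : #C₀ ≤ μ) :
    ∃ C, C₀ ⊆ C ∧ #C ≤ μ ∧ ∀ S : Finset β, ↑S ⊆ C → F S ⊆ C := by
  classical
  let Φ : Set β → Set β := fun X => X ∪ ⋃ S : Finset X, F (S.map (Function.Embedding.subtype _))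
  have hΦ : ∀ X : Set β, #X ≤ μ → #(Φ X) ≤ μ := by
    intro X hX
    have hfin : #(Finset X) ≤ μ :=
      calc #(Finset X) ≤ #(List X) := mk_le_of_surjective List.toFinset_surjective
        _ ≤ max ℵ₀ #X := mk_list_le_max _
        _ ≤ μ := max_le hμ hX
    exact (mk_union_le _ _).trans <| add_le_of_le hμ hX <|
      (mk_iUnion_le _).trans (mul_le_of_le hμ hfin (ciSup_le' fun S => hF _))
  let D : ℕ → Set β := fun k => Φ^[k] C₀
  have hD_succ : ∀ k, D (k + 1) = Φ (D k) := fun k => Function.iterate_succ_apply' Φ k C₀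
  have hD_mono : Monotone D :=
    monotone_nat_of_le_succ fun k => (hD_succ k).symm ▸ subset_union_left
  have hD_card : ∀ k, #(D k) ≤ μ := by
    intro k
    induction k with
    | zero => exact hC₀
    | succ k ih => rw [hD_succ]; exact hΦ _ ih
  refine ⟨⋃ k, D k, subset_iUnion D 0, ?_, fun S hS => ?_⟩
  · exact (mk_iUnion_le _).trans (mul_le_of_le hμ (mk_nat.trans_le hμ) (ciSup_le' hD_card))
  · obtain ⟨k, hk⟩ := hD_mono.directed_le.exists_mem_subset_of_finset_subset_biUnion hS
    have hFS : F S ⊆ Φ (D k) := by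
      rw [← Finset.subtype_map_of_mem (p := (· ∈ D k)) hk]
      exact subset_union_of_subset_right
        (subset_iUnion (fun T : Finset (D k) => F (T.map (Function.Embedding.subtype _))) _) _
    exact hFS.trans ((hD_succ k).symm ▸ subset_iUnion D (k + 1))

theorem exists_realizesVia_homogeneous_to_large {β γ : Type} {μ : Cardinal}
    (hμ : ℵ₀ < μ.ord.cof) (hγ : #γ ≤ μ) (f : Sym2 β → ℕ) {J : Finset ℕ} {g : Sym2 ℕ → ℕ}
    (hJ : ∀ h : Sym2 γ → ℕ, RealizesId h J g) {A : Set β} (hA : μ < #A) :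
    ∃ A' ⊆ A, μ < #A' ∧
      ∃ k e, RealizesVia f J g (A \ A') k ∧ ∀ x ∈ J, ∀ b ∈ A', f s(k x, b) = e := by
  classical
  have hμ₀ : ℵ₀ ≤ μ := hμ.le.trans ((Ordinal.cof_le_card _).trans_eq (card_ord μ))
  let B : Finset β → ℕ → Set β := fun S e => {b ∈ A | b ∉ S ∧ ∀ a ∈ S, f s(a, b) = e}
  obtain ⟨C₀, hC₀A, hC₀⟩ := le_mk_iff_exists_subset.mp hA.le
  obtain ⟨C, hC₀C, hCμ, hC⟩ := exists_superset_mk_le_finset_closed hμ₀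
    (fun S => ⋃ e ∈ {e | #(B S e) ≤ μ}, B S e)
    (fun S => (mk_biUnion_le _ _).trans <| mul_le_of_le hμ₀
      ((mk_le_mk_of_subset (subset_univ _)).trans (mk_univ.trans_le (mk_nat.trans_le hμ₀)))
      (ciSup_le' fun e => e.2))
    hC₀.le
  obtain ⟨b₀, hb₀A, hb₀C⟩ : ∃ b₀ ∈ A, b₀ ∉ C :=
    not_subset.mp fun h => ((mk_le_mk_of_subset h).trans hCμ).not_gt hA
  obtain ⟨e, he⟩ := infinite_pigeonhole_card (fun a : ↥(C ∩ A) => f s(a, b₀)) μ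
    (hC₀.symm.le.trans (mk_le_mk_of_subset (subset_inter hC₀C hC₀A))) hμ₀ (by rwa [mk_nat])
  obtain ⟨j⟩ := (le_def γ _).mp (hγ.trans he)
  let emb : γ → β := fun x => (j x).1.1
  have hemb : Function.Injective emb := fun x y hxy => j.injective (Subtype.ext (Subtype.ext hxy))
  obtain ⟨k₀, hk₀, -, hk₀g⟩ := hJ fun p => f (p.map emb)
  let k : ℕ → β := emb ∘ k₀
  let S : Finset β := J.image k
  have hSC : ↑S ⊆ C ∩ A := by
    simp only [S, Finset.coe_image]
    rintro _ ⟨x, -, rfl⟩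
    exact (j (k₀ x)).1.2
  have hb₀B : b₀ ∈ B S e := by
    refine ⟨hb₀A, fun hb₀S => hb₀C (hSC hb₀S).1, ?_⟩
    simp only [S, Finset.mem_image]
    rintro _ ⟨x, -, rfl⟩
    exact (j (k₀ x)).2
  refine ⟨B S e, fun b hb => hb.1, ?_, k, e, ⟨hemb.comp_injOn hk₀, fun x hx => ?_, ?_⟩, ?_⟩
  · exact lt_of_not_ge fun hle =>
      hb₀C (hC S (hSC.trans inter_subset_left) (mem_biUnion (x := e) hle hb₀B))
  · exact ⟨(hSC (Finset.mem_image_of_mem k hx)).2, fun hb => hb.2.1 (Finset.mem_image_of_mem k hx)⟩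
  · intro x y u v hx hy hu hv hxy huv hne
    exact hk₀g x y u v hx hy hu hv hxy huv (by simp only [Sym2.map_mk]; exact hne)
  · exact fun x hx b hb => hb.2.2 (k x) (Finset.mem_image_of_mem k hx)

theorem exists_layered_realizesVia {β γ : Type} {μ : Cardinal} (hμ : ℵ₀ < μ.ord.cof)
    (hγ : #γ ≤ μ) (hβ : μ < #β) (f : Sym2 β → ℕ) {n : ℕ}
    {Js : Fin n → Σ _ : Finset ℕ, Sym2 ℕ → ℕ}
    (hJs : ∀ i, ∀ g : Sym2 γ → ℕ, RealizesId g (Js i).1 (Js i).2) :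
    ∃ (A : ℕ → Set β) (K : Fin n → ℕ → β) (E : Fin n → ℕ), Antitone A ∧
      (∀ i, RealizesVia f (Js i).1 (Js i).2 (A i \ A (i + 1 : ℕ)) (K i)) ∧
      ∀ i, ∀ x ∈ (Js i).1, ∀ b ∈ A (i + 1 : ℕ), f s(K i x, b) = E i := by
  let R : ℕ → Set β → Set β → Prop := fun j A A' => A' ⊆ A ∧ ∀ i : Fin n, (i : ℕ) = j →
    ∃ k e, RealizesVia f (Js i).1 (Js i).2 (A \ A') k ∧ ∀ x ∈ (Js i).1, ∀ b ∈ A', f s(k x, b) = e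
  have step : ∀ j (A : Set β), μ < #A → ∃ A' : Set β, μ < #A' ∧ R j A A' := by
    intro j A hA
    by_cases hj : ∃ i : Fin n, (i : ℕ) = j
    · obtain ⟨i, rfl⟩ := hj
      obtain ⟨A', hA'A, hA', hreal⟩ := exists_realizesVia_homogeneous_to_large hμ hγ f (hJs i) hA
      exact ⟨A', hA', hA'A, fun i' hi' => Fin.ext hi' ▸ hreal⟩
    · exact ⟨A, hA, subset_rfl, fun i hi => absurd ⟨i, hi⟩ hj⟩
  obtain ⟨A, hA⟩ := exists_seq_forall_rel step (a₀ := Set.univ) (by rwa [mk_univ])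
  choose K E hK hE using fun i : Fin n => (hA i).2 i rfl
  exact ⟨A, K, E, antitone_nat_of_succ_le fun j => (hA j).1, hK, hE⟩

structure IsEndHomogeneousAmalgam {n : ℕ} (Js : Fin n → Σ _ : Finset ℕ, Sym2 ℕ → ℕ)
    (G : Finset ℕ) (ι : ℕ → Fin n) (c : Sym2 ℕ → ℕ) : Prop where
  field_eq : G = Finset.univ.biUnion fun i => (Js i).1
  index_eq : ∀ i : Fin n, ∀ x ∈ (Js i).1, ι x = i
  eq_on_block : ∀ i : Fin n, ∀ x y : ℕ, x ∈ (Js i).1 → y ∈ (Js i).1 → x ≠ y →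
    c s(x, y) = (Js i).2 s(x, y)
  exists_eq_iff_mem : ∀ i : Fin n, ∀ r s : ℕ, r ∈ G → s ∈ G → r ≠ s →
    ((∃ x y : ℕ, x ∈ (Js i).1 ∧ y ∈ (Js i).1 ∧ x ≠ y ∧ c s(r, s) = (Js i).2 s(x, y)) ↔
      (r ∈ (Js i).1 ∧ s ∈ (Js i).1))
  cross_eq_iff : ∀ r s t w : ℕ, r ∈ G → s ∈ G → t ∈ G → w ∈ G → r ≠ s → t ≠ w →
    ι r ≠ ι s → ι t ≠ ι w → (c s(r, s) = c s(t, w) ↔ min (ι r) (ι s) = min (ι t) (ι w))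

namespace IsEndHomogeneousAmalgam

variable {n : ℕ} {Js : Fin n → Σ _ : Finset ℕ, Sym2 ℕ → ℕ} {G : Finset ℕ} {ι : ℕ → Fin n}
  {c : Sym2 ℕ → ℕ}

theorem mem_index (hc : IsEndHomogeneousAmalgam Js G ι c) {x : ℕ} (hx : x ∈ G) :
    x ∈ (Js (ι x)).1 := by
  rw [hc.field_eq] at hx
  obtain ⟨i, -, hi⟩ := Finset.mem_biUnion.mp hx
  rwa [hc.index_eq i x hi]

theorem mem_of_color_eq (hc : IsEndHomogeneousAmalgam Js G ι c) {i : Fin n} {x y u v : ℕ}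
    (hx : x ∈ (Js i).1) (hy : y ∈ (Js i).1) (hxy : x ≠ y) (hu : u ∈ G) (hv : v ∈ G)
    (huv : u ≠ v) (h : c s(u, v) = c s(x, y)) : u ∈ (Js i).1 ∧ v ∈ (Js i).1 :=
  (hc.exists_eq_iff_mem i u v hu hv huv).mp
    ⟨x, y, hx, hy, hxy, h.trans (hc.eq_on_block i x y hx hy hxy)⟩

theorem color_eq_cases (hc : IsEndHomogeneousAmalgam Js G ι c) {x y u v : ℕ} (hx : x ∈ G)
    (hy : y ∈ G) (hu : u ∈ G) (hv : v ∈ G) (hxy : x ≠ y) (huv : u ≠ v)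
    (h : c s(x, y) = c s(u, v)) :
    (∃ i, x ∈ (Js i).1 ∧ y ∈ (Js i).1 ∧ u ∈ (Js i).1 ∧ v ∈ (Js i).1) ∨
      (ι x ≠ ι y ∧ ι u ≠ ι v ∧ min (ι x) (ι y) = min (ι u) (ι v)) := by
  by_cases hxy' : ι x = ι y
  · have hyx : y ∈ (Js (ι x)).1 := hxy' ▸ hc.mem_index hy
    exact .inl ⟨ι x, hc.mem_index hx, hyx,
      hc.mem_of_color_eq (hc.mem_index hx) hyx hxy hu hv huv h.symm⟩
  by_cases huv' : ι u = ι v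
  · have hvu : v ∈ (Js (ι u)).1 := huv' ▸ hc.mem_index hv
    obtain ⟨hxu, hyu⟩ := hc.mem_of_color_eq (hc.mem_index hu) hvu huv hx hy hxy h
    exact .inl ⟨ι u, hxu, hyu, hc.mem_index hu, hvu⟩
  exact .inr ⟨hxy', huv', (hc.cross_eq_iff x y u v hx hy hu hv hxy huv hxy' huv').mp h⟩

theorem realizesId_of_layers {β : Type*} (hc : IsEndHomogeneousAmalgam Js G ι c)
    {f : Sym2 β → ℕ} {A : ℕ → Set β} {K : Fin n → ℕ → β} {E : Fin n → ℕ} (hA : Antitone A)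
    (hK : ∀ i, RealizesVia f (Js i).1 (Js i).2 (A i \ A (i + 1 : ℕ)) (K i))
    (hE : ∀ i, ∀ x ∈ (Js i).1, ∀ b ∈ A (i + 1 : ℕ), f s(K i x, b) = E i) :
    RealizesId f G c := by
  let k : ℕ → β := fun x => K (ι x) x
  have hk_block : ∀ i, ∀ x ∈ (Js i).1, k x = K i x := fun i x hx => by
    simp only [k, hc.index_eq i x hx]
  have hk_layer : ∀ x ∈ G, k x ∈ A (ι x) \ A (ι x + 1 : ℕ) := fun x hx =>
    (hK (ι x)).2.1 x (hc.mem_index hx)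
  have hk_later : ∀ x ∈ G, ∀ y ∈ G, ι x < ι y → k y ∈ A (ι x + 1 : ℕ) := fun x _ y hy hlt =>
    hA (Nat.succ_le_of_lt hlt) (hk_layer y hy).1
  have hk_cross_lt : ∀ x ∈ G, ∀ y ∈ G, ι x < ι y → f s(k x, k y) = E (ι x) := fun x hx y hy hlt =>
    hE (ι x) x (hc.mem_index hx) (k y) (hk_later x hx y hy hlt)
  have hk_cross : ∀ x ∈ G, ∀ y ∈ G, ι x ≠ ι y → f s(k x, k y) = E (min (ι x) (ι y)) := by
    intro x hx y hy hne
    rcases hne.lt_or_gt with hlt | hlt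
    · rw [min_eq_left hlt.le, hk_cross_lt x hx y hy hlt]
    · rw [min_eq_right hlt.le, Sym2.eq_swap, hk_cross_lt y hy x hx hlt]
  have hk_inj : Set.InjOn k G := by
    intro x hx y hy hxy
    rcases lt_trichotomy (ι x) (ι y) with hlt | heq | hlt
    · exact absurd (hxy ▸ hk_later x hx y hy hlt) (hk_layer x hx).2
    · have hy' : y ∈ (Js (ι x)).1 := heq ▸ hc.mem_index hy
      exact (hK (ι x)).1 (hc.mem_index hx) hy' (hk_block _ y hy' ▸ hxy)
    · exact absurd (hxy ▸ hk_later y hy x hx hlt) (hk_layer y hy).2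
  refine RealizesVia.realizesWithin (k := k) ⟨hk_inj, fun _ _ => mem_univ _, ?_⟩
  intro x y u v hx hy hu hv hxy huv hne h
  rcases hc.color_eq_cases hx hy hu hv hxy huv h with ⟨i, hxi, hyi, hui, hvi⟩ | ⟨hxy', huv', hmin⟩
  · rw [hk_block i x hxi, hk_block i y hyi, hk_block i u hui, hk_block i v hvi] at hne
    refine (hK i).2.2 x y u v hxi hyi hui hvi hxy huv hne ?_
    rw [← hc.eq_on_block i x y hxi hyi hxy, ← hc.eq_on_block i u v hui hvi huv, h]
  · exact hne (by rw [hk_cross x hx y hy hxy', hk_cross u hu v hv huv', hmin])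

end IsEndHomogeneousAmalgam

theorem closure_realized_at_successor_general (m : ℕ) (hm : 1 ≤ m)
    (I : Set ((G : Finset ℕ) × (Sym2 ℕ → ℕ)))
    (hI : ∀ J ∈ I, ∀ g : Sym2 (alephT m) → ℕ, RealizesId g J.1 J.2)
    -- an end-homogeneous amalgam `⟨G, c⟩` of a sequence `⟨Js 1, …, Js n⟩` from `I`:
    (n : ℕ) (Js : Fin n → (G : Finset ℕ) × (Sym2 ℕ → ℕ))
    (hJsI : ∀ i, Js i ∈ I)
    (G : Finset ℕ) (hG : G = Finset.univ.biUnion fun i => (Js i).1)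
    (ι : ℕ → Fin n) (hι : ∀ i : Fin n, ∀ x ∈ (Js i).1, ι x = i)
    (c : Sym2 ℕ → ℕ)
    -- `c` extends each `c_i`
    (hext : ∀ i : Fin n, ∀ x y : ℕ, x ∈ (Js i).1 → y ∈ (Js i).1 → x ≠ y →
      c s(x, y) = (Js i).2 s(x, y))
    -- `c({r,s}) ∈ rng(c_i)` iff `{r,s} ∈ dom(c_i)`
    (hrng : ∀ i : Fin n, ∀ r s : ℕ, r ∈ G → s ∈ G → r ≠ s →
      ((∃ x y : ℕ, x ∈ (Js i).1 ∧ y ∈ (Js i).1 ∧ x ≠ y ∧ c s(r, s) = (Js i).2 s(x, y)) ↔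
        (r ∈ (Js i).1 ∧ s ∈ (Js i).1)))
    -- cross pairs are colored according to the least index met
    (hcross : ∀ r s t w : ℕ, r ∈ G → s ∈ G → t ∈ G → w ∈ G → r ≠ s → t ≠ w →
      ι r ≠ ι s → ι t ≠ ι w →
      (c s(r, s) = c s(t, w) ↔ min (ι r) (ι s) = min (ι t) (ι w))) :
    ∀ f : Sym2 (alephT (m + 1)) → ℕ, RealizesId f G c := by
  intro f
  have hβ : ℵ_ m < #(alephT (m + 1)) := by
    rw [mk_alephT]
    exact aleph_lt_aleph.mpr (by exact_mod_cast m.lt_succ_self)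
  obtain ⟨A, K, E, hA, hK, hE⟩ := exists_layered_realizesVia (aleph0_lt_cof_aleph hm)
    (mk_alephT m).le hβ f fun i => hI _ (hJsI i)
  exact IsEndHomogeneousAmalgam.realizesId_of_layers ⟨hG, hι, hext, hrng, hcross⟩ hA hK hE

/-- If every identity in `I` is realized by every ω-coloring of `[ℵ_m]²`, then every
end-homogeneous amalgam of a finite sequence of identities from `I` (i.e. every member of
`cl(I)`) is realized by every ω-coloring of `[ℵ_{m+1}]²`. -/
theorem closure_realized_at_successor (m : ℕ) (hm : 1 ≤ m)
    (I : Set ((G : Finset ℕ) × (Sym2 ℕ → ℕ)))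
    (hI : ∀ J ∈ I, ∀ g : Sym2 (alephT m) → ℕ, RealizesId g J.1 J.2)
    -- an end-homogeneous amalgam `⟨G, c⟩` of a sequence `⟨Js 1, …, Js n⟩` from `I`:
    (n : ℕ) (hn : 1 ≤ n) (Js : Fin n → (G : Finset ℕ) × (Sym2 ℕ → ℕ))
    (hJsI : ∀ i, Js i ∈ I)
    -- pairwise disjoint fields
    (hdisj : ∀ i j : Fin n, i ≠ j → Disjoint (Js i).1 (Js j).1)
    -- pairwise disjoint ranges of the representatives
    (hranges : ∀ i j : Fin n, i ≠ j → ∀ x y u v : ℕ,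
      x ∈ (Js i).1 → y ∈ (Js i).1 → x ≠ y → u ∈ (Js j).1 → v ∈ (Js j).1 → u ≠ v →
      (Js i).2 s(x, y) ≠ (Js j).2 s(u, v))
    (G : Finset ℕ) (hG : G = Finset.univ.biUnion fun i => (Js i).1)
    (ι : ℕ → Fin n) (hι : ∀ i : Fin n, ∀ x ∈ (Js i).1, ι x = i)
    (c : Sym2 ℕ → ℕ)
    -- `c` extends each `c_i`
    (hext : ∀ i : Fin n, ∀ x y : ℕ, x ∈ (Js i).1 → y ∈ (Js i).1 → x ≠ y →
      c s(x, y) = (Js i).2 s(x, y))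
    -- `c({r,s}) ∈ rng(c_i)` iff `{r,s} ∈ dom(c_i)`
    (hrng : ∀ i : Fin n, ∀ r s : ℕ, r ∈ G → s ∈ G → r ≠ s →
      ((∃ x y : ℕ, x ∈ (Js i).1 ∧ y ∈ (Js i).1 ∧ x ≠ y ∧ c s(r, s) = (Js i).2 s(x, y)) ↔
        (r ∈ (Js i).1 ∧ s ∈ (Js i).1)))
    -- cross pairs are colored according to the least index met
    (hcross : ∀ r s t w : ℕ, r ∈ G → s ∈ G → t ∈ G → w ∈ G → r ≠ s → t ≠ w →
      ι r ≠ ι s → ι t ≠ ι w →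
      (c s(r, s) = c s(t, w) ↔ min (ι r) (ι s) = min (ι t) (ι w))) :
    ∀ f : Sym2 (alephT (m + 1)) → ℕ, RealizesId f G c :=
  closure_realized_at_successor_general m hm I hI n Js hJsI G hG ι hι c hext hrng hcross
end

section
/- Let f : [B]² → ℕ with |B| = ℵ_{m+1}, and let J_1, …, J_n be identities each realized by every coloring of a set of size ℵ_m. Then there exist pairwise disjoint finite sets A_1, …, A_n ⊆ B, with every element of A_i less than every element of A_j for i < j, such that f realizes J_i on A_i, and colors c_1, …, c_n < ω such that f({a,b}) = c_i whenever a ∈ A_i and b ∈ A_j with i < j. -/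
/-! With `κ = ℵ_m`, split `T` (of size `≥ κ⁺`) into an initial segment `P` of size `κ` and the
rest `R`. For each `b ∈ R`, pigeonhole gives `κ` points of `P` joined to `b` by a single color,
and `f` realizes `J` on a finite subset `A_b` of them. The pair `(A_b, c_b)` takes at most `κ`
values, so `κ⁺` points `b` share it; recurse on those. -/

open Cardinal Set Order
open scoped Ordinal

universe u v

section Realizes

variable {β X : Type*} {f : Sym2 β → ℕ} {G : Finset ℕ} {g : Sym2 ℕ → ℕ}

theorem RealizesWithin.mono {S S' : Set β} (h : RealizesWithin f G g S) (hS : S ⊆ S') :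
    RealizesWithin f G g S' :=
  let ⟨k, hk, hkS, hfg⟩ := h
  ⟨k, hk, fun x hx => hS (hkS x hx), hfg⟩

theorem RealizesWithin.exists_finset {S : Set β} (h : RealizesWithin f G g S) :
    ∃ A : Finset β, ↑A ⊆ S ∧ RealizesWithin f G g ↑A := by
  classical
  obtain ⟨k, hk, hkS, hfg⟩ := h
  refine ⟨G.image k, ?_, k, hk, fun x hx => Finset.mem_coe.2 (Finset.mem_image_of_mem k hx), hfg⟩
  simpa [Set.subset_def] using hkS

theorem RealizesId.realizesWithin_range {e : X → β} (he : Function.Injective e)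
    (h : RealizesId (f ∘ Sym2.map e) G g) : RealizesWithin f G g (range e) := by
  obtain ⟨k, hk, -, hfg⟩ := h
  refine ⟨e ∘ k, he.comp_injOn hk, fun x _ => mem_range_self _, ?_⟩
  intro x y u w hx hy hu hw hxy huw hne
  exact hfg x y u w hx hy hu hw hxy huw (by simpa [Sym2.map_mk] using hne)

end Realizes

theorem realizesWithin_of_lift_mk_le {β : Type u} {X : Type v} {G : Finset ℕ} {g : Sym2 ℕ → ℕ}
    (hX : ∀ c : Sym2 X → ℕ, RealizesId c G g) (f : Sym2 β → ℕ) {S : Set β}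
    (hS : lift.{u} #X ≤ lift.{v} #S) : RealizesWithin f G g S := by
  obtain ⟨e⟩ := lift_mk_le'.1 hS
  refine ((hX _).realizesWithin_range (f := f) (Subtype.val_injective.comp e.injective)).mono ?_
  rintro _ ⟨x, rfl⟩
  exact (e x).2

theorem exists_mk_Iio_eq {γ : Type u} [LinearOrder γ] [WellFoundedLT γ] {κ : Cardinal.{u}}
    (h : κ < #γ) : ∃ b : γ, #(Iio b) = κ := by
  have hκ : κ.ord < typeLT γ := lt_of_not_ge fun hle => h.not_ge (by
    simpa using Ordinal.card_le_card hle)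
  refine ⟨Ordinal.enum (· < ·) ⟨κ.ord, hκ⟩, ?_⟩
  have := congrArg Ordinal.card (Ordinal.typein_enum (α := γ) (· < ·) hκ)
  rwa [Ordinal.card_typein, card_ord] at this

section WellOrder

variable {α : Type u} [LinearOrder α] [WellFoundedLT α]

theorem Set.exists_split_of_lt_mk {T : Set α} {κ : Cardinal.{u}} (hT : ℵ₀ ≤ #T)
    (h : κ < #T) : ∃ P ⊆ T, ∃ R ⊆ T, (∀ a ∈ P, ∀ b ∈ R, a < b) ∧ #P = κ ∧ #R = #T := by
  obtain ⟨b, hb⟩ := exists_mk_Iio_eq h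
  have hP : #{a ∈ T | a < b} = κ := by
    have hPeq : {a ∈ T | a < b} = Subtype.val '' Iio b := by
      ext a
      simp [and_comm, ← Subtype.coe_lt_coe]
    rw [hPeq, mk_image_eq Subtype.val_injective, hb]
  refine ⟨{a ∈ T | a < b}, sep_subset _ _, {a ∈ T | b ≤ a}, sep_subset _ _,
    fun a ha c hc => ha.2.trans_le hc.2, hP, (mk_le_mk_of_subset (sep_subset _ _)).antisymm ?_⟩
  by_contra! hR
  have hcover : T ⊆ {a ∈ T | a < b} ∪ {a ∈ T | b ≤ a} := fun a ha =>
    (lt_or_ge a b).imp (⟨ha, ·⟩) (⟨ha, ·⟩)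
  exact ((mk_le_mk_of_subset hcover).trans (mk_union_le _ _)).not_gt (add_lt_of_lt hT (hP ▸ h) hR)

end WellOrder

section Step

variable {α : Type u} {X : Type v} {κ : Cardinal.{u}} {G : Finset ℕ} {g : Sym2 ℕ → ℕ}

theorem exists_finset_realizesWithin_forall_eq (hκ : ℵ₀ < κ.ord.cof)
    (hX : ∀ c : Sym2 X → ℕ, RealizesId c G g) (hXκ : lift.{u} #X ≤ lift.{v} κ)
    (f : Sym2 α → ℕ) {P : Set α} (hP : κ ≤ #P) (b : α) :
    ∃ (A : Finset α) (c : ℕ), ↑A ⊆ P ∧ RealizesWithin f G g ↑A ∧ ∀ a ∈ A, f s(a, b) = c := by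
  obtain ⟨c, Y, hYP, hYκ, hYc⟩ := infinite_pigeonhole_set
    (fun a : P => ULift.up.{u} (f s(a.1, b))) κ hP (hκ.le.trans (Ordinal.cof_ord_le κ))
    (by simpa using hκ)
  obtain ⟨A, hAY, hA⟩ :=
    (realizesWithin_of_lift_mk_le hX f (hXκ.trans (lift_le.2 hYκ))).exists_finset
  exact ⟨A, c.down, hAY.trans hYP, hA, fun a ha => congrArg ULift.down (hYc (hAY ha))⟩

theorem exists_finset_realizesWithin_endHomogeneous [LinearOrder α] [WellFoundedLT α]
    (hκ : ℵ₀ < κ.ord.cof) (hX : ∀ c : Sym2 X → ℕ, RealizesId c G g)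
    (hXκ : lift.{u} #X ≤ lift.{v} κ) (f : Sym2 α → ℕ) {T : Set α} (hT : succ κ ≤ #T) :
    ∃ (A : Finset α) (c : ℕ) (T' : Set α), ↑A ⊆ T ∧ RealizesWithin f G g ↑A ∧ T' ⊆ T ∧
      succ κ ≤ #T' ∧ ∀ a ∈ A, ∀ b ∈ T', a < b ∧ f s(a, b) = c := by
  have hκ0 : ℵ₀ ≤ κ := hκ.le.trans (Ordinal.cof_ord_le κ)
  obtain ⟨P, hPT, R, hRT, hPR, hP, hR⟩ := T.exists_split_of_lt_mk
    ((hκ0.trans (le_succ κ)).trans hT) ((lt_succ κ).trans_le hT)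
  choose A c hAP hA hAc using fun b : R =>
    exists_finset_realizesWithin_forall_eq hκ hX hXκ f hP.ge b.1
  have : Infinite P := infinite_iff.2 (hP ▸ hκ0)
  have hcard : #({A : Finset α // ∀ a ∈ A, a ∈ P} × ULift.{u} ℕ) < (succ κ).ord.cof := by
    rw [(isRegular_succ hκ0).cof_ord, mk_prod, ← mk_congr (Equiv.finsetSubtypeComm (· ∈ P)),
      mk_finset_of_infinite, hP]
    simp [mul_aleph0_eq hκ0]
  obtain ⟨⟨A₀, c₀⟩, R', hR'R, hR', hR'eq⟩ := infinite_pigeonhole_set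
    (fun b : R => ((⟨A b, fun a ha => hAP b ha⟩ : {A : Finset α // ∀ a ∈ A, a ∈ P}),
      ULift.up.{u} (c b))) (succ κ) (hR ▸ hT) (hκ0.trans (le_succ κ)) hcard
  obtain ⟨b₀, hb₀⟩ : R'.Nonempty :=
    nonempty_iff_ne_empty.2 fun h => by simp [h] at hR'
  have hA₀ : ∀ ⦃b⦄ (hb : b ∈ R'), A ⟨b, hR'R hb⟩ = A₀.1 ∧ c ⟨b, hR'R hb⟩ = c₀.down := fun b hb =>
    by simpa [Prod.ext_iff, Subtype.ext_iff, ULift.ext_iff] using hR'eq hb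
  refine ⟨A₀.1, c₀.down, R', fun a ha => hPT (A₀.2 a ha), ?_, hR'R.trans hRT, hR', ?_⟩
  · simpa only [(hA₀ hb₀).1] using hA ⟨b₀, hR'R hb₀⟩
  · intro a ha b hb
    refine ⟨hPR a (A₀.2 a ha) b (hR'R hb), ?_⟩
    rw [← (hA₀ hb).2]
    exact hAc ⟨b, hR'R hb⟩ a ((hA₀ hb).1 ▸ ha)

theorem exists_endHomogeneous_family [LinearOrder α] [WellFoundedLT α] (hκ : ℵ₀ < κ.ord.cof)
    (hXκ : lift.{u} #X ≤ lift.{v} κ) (f : Sym2 α → ℕ)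
    {n : ℕ} (Js : Fin n → (_ : Finset ℕ) × (Sym2 ℕ → ℕ))
    (hJs : ∀ i, ∀ c : Sym2 X → ℕ, RealizesId c (Js i).1 (Js i).2) {T : Set α}
    (hT : succ κ ≤ #T) :
    ∃ (A : Fin n → Finset α) (cs : Fin n → ℕ) (T' : Set α),
      (∀ i, ↑(A i) ⊆ T) ∧ (∀ i, RealizesWithin f (Js i).1 (Js i).2 ↑(A i)) ∧
      (∀ i j, i < j → ∀ a ∈ A i, ∀ b ∈ A j, a < b ∧ f s(a, b) = cs i) ∧
      T' ⊆ T ∧ succ κ ≤ #T' ∧ ∀ i, ∀ a ∈ A i, ∀ b ∈ T', a < b ∧ f s(a, b) = cs i := by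
  induction n generalizing T with
  | zero => exact ⟨finZeroElim, finZeroElim, T, finZeroElim, finZeroElim, finZeroElim,
      subset_rfl, hT, finZeroElim⟩
  | succ n ih =>
    obtain ⟨A₀, c₀, T₁, hA₀T, hA₀, hT₁T, hT₁, hA₀T₁⟩ :=
      exists_finset_realizesWithin_endHomogeneous hκ (hJs 0) hXκ f hT
    obtain ⟨A, cs, T', hAT₁, hA, hAA, hT'T₁, hT', hAT'⟩ :=
      ih (fun i => Js i.succ) (fun i => hJs i.succ) hT₁
    refine ⟨Fin.cons A₀ A, Fin.cons c₀ cs, T', ?_, ?_, ?_, hT'T₁.trans hT₁T, hT', ?_⟩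
    · simp only [Fin.forall_fin_succ, Fin.cons_zero, Fin.cons_succ]
      exact ⟨hA₀T, fun i => (hAT₁ i).trans hT₁T⟩
    · simp only [Fin.forall_fin_succ, Fin.cons_zero, Fin.cons_succ]
      exact ⟨hA₀, hA⟩
    · simp only [Fin.forall_fin_succ, Fin.cons_zero, Fin.cons_succ, lt_irrefl, Fin.succ_pos,
        Fin.succ_lt_succ_iff, (Fin.succ_pos _).not_gt, false_imp_iff, true_imp_iff, true_and]
      exact ⟨fun j a ha b hb => hA₀T₁ a ha b (hAT₁ j hb), hAA⟩
    · simp only [Fin.forall_fin_succ, Fin.cons_zero, Fin.cons_succ]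
      exact ⟨fun a ha b hb => hA₀T₁ a ha b (hT'T₁ hb), hAT'⟩

end Step

theorem aleph0_lt_cof_ord_aleph_natCast {m : ℕ} (hm : 1 ≤ m) :
    ℵ₀ < (ℵ_ m : Cardinal.{u}).ord.cof := by
  obtain ⟨k, rfl⟩ := Nat.exists_eq_add_of_le' hm
  rw [Nat.cast_succ, (isRegular_aleph_add_one _).cof_ord, ← aleph_zero, aleph_lt_aleph]
  exact_mod_cast Nat.succ_pos k

theorem lift_mk_alephT (m : ℕ) : lift.{u} #(alephT m) = ℵ_ m := by
  rw [alephT, mk_toType, card_ord, lift_aleph, Ordinal.lift_natCast]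

/-- Let `f` be an ω-coloring of a set `B` of ordinals with `|B| = ℵ_{m+1}` and let
`J_1, …, J_n` be identities each realized by every coloring of a set of size `ℵ_m`. Then
there are pairwise disjoint finite sets `A_1, …, A_n ⊆ B`, with every element of `A_i` below
every element of `A_j` for `i < j`, such that `f` realizes `J_i` on `A_i`, and colors
`c_1, …, c_n` with `f({a,b}) = c_i` whenever `a ∈ A_i`, `b ∈ A_j`, `i < j`. -/
theorem end_homogeneous_configuration (m : ℕ) (hm : 1 ≤ m)
    (B : Set Ordinal) (hB : Cardinal.mk B = Cardinal.aleph (m + 1))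
    (f : Sym2 Ordinal → ℕ)
    (n : ℕ) (Js : Fin n → (G : Finset ℕ) × (Sym2 ℕ → ℕ))
    (hJs : ∀ i : Fin n, ∀ g : Sym2 (alephT m) → ℕ, RealizesId g (Js i).1 (Js i).2) :
    ∃ (A : Fin n → Finset Ordinal) (cs : Fin n → ℕ),
      (∀ i, ↑(A i) ⊆ B) ∧
      (∀ i j, i ≠ j → Disjoint (A i) (A j)) ∧
      (∀ i j : Fin n, i < j → ∀ a ∈ A i, ∀ b ∈ A j, a < b) ∧
      (∀ i, RealizesWithin f (Js i).1 (Js i).2 ↑(A i)) ∧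
      (∀ i j : Fin n, i < j → ∀ a ∈ A i, ∀ b ∈ A j, f s(a, b) = cs i) := by
  obtain ⟨A, cs, -, hAB, hA, hAA, -⟩ := exists_endHomogeneous_family
    (aleph0_lt_cof_ord_aleph_natCast hm) (by rw [lift_mk_alephT, lift_uzero]) f Js hJs
    (T := B) (by rw [hB, succ_aleph])
  have hlt : ∀ i j, i < j → ∀ a ∈ A i, ∀ b ∈ A j, a < b := fun i j hij a ha b hb =>
    (hAA i j hij a ha b hb).1
  refine ⟨A, cs, hAB, fun i j hij => Finset.disjoint_left.2 fun a hai haj => ?_, hlt, hA,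
    fun i j hij a ha b hb => (hAA i j hij a ha b hb).2⟩
  rcases hij.lt_or_gt with h | h
  exacts [(hlt i j h a hai a haj).false, (hlt j i h a haj a hai).false]
end
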